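/- arXiv:1310.7984 — 2 statements merged into one kernel-verified Lean document; each statement's English description precedes it below -/
import Mathlib

section
/- Let G be a finite simple connected non-bipartite graph on n vertices and I(G*) the edge ideal of its whisker graph in S* = K[x_1,...,x_n,y_1,...,y_n]. Then depth(S*/I(G*)^k) = 0 for all k ≥ n; equivalently, the maximal graded ideal is an associated prime of S*/I(G*)^k. -/
/-!
A connected non-bipartite graph on `n` vertices has an odd closed walk of length less than twice
the number of vertices it visits (two shortest paths from a base vertex to the ends of an edge
whose ends have distances of equal parity). Detours `y → z → y` add two to the length and may
add the vertex `z`, so for every `k ≥ n` there is a closed walk `c_0, c_1, …, c_{2k-1} = c_0`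
through all vertices. The monomial `u = x_{c_1} ⋯ x_{c_{2k-1}}` has degree `2k - 1`, hence is not
in `I(G*)^k`, which is generated in degree `2k`. Rotating the walk to start at any vertex `v`,
`x_v u` is the product of the `k` edges `x_{c_0} x_{c_1}, …, x_{c_{2k-2}} x_{c_{2k-1}}`, and
`y_v u = (x_v y_v) x_{c_1} ⋯ x_{c_{2k-2}}` is a whisker times `k - 1` edges. So the maximal ideal
annihilates the nonzero class of `u` in `S*/I(G*)^k`.
-/

open MvPolynomial

/-- The depth of the module `M` with respect to the ideal `m`: the supremum of the
lengths of `M`-regular sequences consisting of elements of `m`. -/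
noncomputable def idealDepth {R : Type*} [CommRing R] (m : Ideal R)
    (M : Type*) [AddCommGroup M] [Module R M] : ℕ :=
  sSup {d : ℕ | ∃ rs : List R, rs.length = d ∧ (∀ r ∈ rs, r ∈ m) ∧
    RingTheory.Sequence.IsRegular M rs}

/-- The graded maximal ideal of a polynomial ring, generated by all the variables. -/
noncomputable def maxIdeal (σ K : Type*) [Field K] : Ideal (MvPolynomial σ K) :=
  Ideal.span (Set.range X)

/-- The edge ideal of the whisker graph `G*` of a graph `G` on `{1,…,n}`, inside
`S* = K[x_1,…,x_n,y_1,…,y_n]`, where `x_i = X (Sum.inl i)` and `y_i = X (Sum.inr i)`.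
It is generated by `x_i x_j` for edges `{i,j}` of `G` and by `x_i y_i` for all `i`. -/
noncomputable def whiskerEdgeIdeal {n : ℕ} (K : Type*) [Field K] (G : SimpleGraph (Fin n)) :
    Ideal (MvPolynomial (Fin n ⊕ Fin n) K) :=
  Ideal.span ({p | ∃ i j, G.Adj i j ∧ p = X (Sum.inl i) * X (Sum.inl j)} ∪
    Set.range (fun i : Fin n => X (Sum.inl i) * X (Sum.inr i)))

open Finset

namespace SimpleGraph

variable {V : Type*} {G : SimpleGraph V}

lemma Walk.IsPath.length_lt_card_toFinset [DecidableEq V] {u v : V} {p : G.Walk u v}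
    (hp : p.IsPath) {l : List V} (hl : p.support ⊆ l) : p.length < #l.toFinset := by
  have := card_le_card fun x hx => List.mem_toFinset.2 (hl (List.mem_toFinset.1 hx))
  rwa [List.toFinset_card_of_nodup hp.support_nodup, Walk.length_support,
    Nat.add_one_le_iff] at this

open Walk

lemma exists_odd_closed_walk_length_lt [DecidableEq V] (hG : G.Connected)
    (hbip : ¬ G.Colorable 2) :
    ∃ (r : V) (w : G.Walk r r), Odd w.length ∧ w.length < 2 * #w.support.toFinset := by
  obtain ⟨r⟩ := hG.nonempty
  obtain ⟨u, v, huv, hpar⟩ : ∃ u v, G.Adj u v ∧ G.dist r u % 2 = G.dist r v % 2 := by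
    by_contra! h
    exact hbip ⟨Coloring.mk (fun v => ⟨G.dist r v % 2, Nat.mod_lt _ two_pos⟩)
      fun huv heq => h _ _ huv (Fin.val_eq_of_eq heq)⟩
  obtain ⟨p, hp, hplen⟩ := (hG.preconnected r u).exists_path_of_dist
  obtain ⟨q, hq, hqlen⟩ := (hG.preconnected r v).exists_path_of_dist
  refine ⟨r, p.append (cons huv q.reverse), ?_, ?_⟩
  · simp only [length_append, length_cons, length_reverse, hplen, hqlen, Nat.odd_iff]
    omega
  · have hp' := hp.length_lt_card_toFinset
      (support_subset_support_append_left p (cons huv q.reverse))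
    have hq' := hq.length_lt_card_toFinset (l := (p.append (cons huv q.reverse)).support)
      fun x hx => support_subset_support_append_right _ _ (by simpa using Or.inr hx)
    simp only [length_append, length_cons, length_reverse]
    omega

lemma exists_closed_walk_forall_mem_support [Fintype V] [DecidableEq V] (hG : G.Connected)
    (m : ℕ) {r : V} (w : G.Walk r r) (hw : ¬ w.Nil)
    (hcard : Fintype.card V ≤ #w.support.toFinset + m) :
    ∃ (v : V) (w' : G.Walk v v), w'.length = w.length + 2 * m ∧ ∀ x, x ∈ w'.support := by
  induction m generalizing r w with
  | zero =>
    have huniv : w.support.toFinset = univ :=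
      eq_univ_of_card _ (le_antisymm (card_le_univ _) hcard)
    exact ⟨r, w, rfl, fun x => List.mem_toFinset.mp (huniv ▸ mem_univ x)⟩
  | succ m ih =>
    obtain ⟨y, hy, z, hyz, hz⟩ : ∃ y ∈ w.support, ∃ z, G.Adj y z ∧
        Fintype.card V ≤ #(insert z w.support.toFinset) + m := by
      by_cases hall : ∀ x, x ∈ w.support
      · refine ⟨r, w.start_mem_support, w.snd, w.adj_snd hw, ?_⟩
        have : w.support.toFinset = univ := eq_univ_of_forall (by simpa using hall)
        simp [this]
      · push Not at hall
        obtain ⟨x, hx⟩ := hall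
        obtain ⟨d, -, hd, hd'⟩ :=
          (hG.preconnected r x).some.exists_boundary_dart {v | v ∈ w.support}
            w.start_mem_support hx
        refine ⟨d.fst, hd, d.snd, d.adj, ?_⟩
        rw [card_insert_of_notMem (by simpa using hd')]
        omega
    refine ih (cons hyz (cons hyz.symm (w.rotate y hy))) not_nil_cons (hz.trans ?_)
      |>.imp fun v ⟨w', hlen, hall⟩ =>
        ⟨w', by simp only [hlen, length_cons, length_rotate]; ring, hall⟩
    gcongr
    intro a
    simp +contextual

lemma exists_closed_walk_length_eq_forall_mem_support [Fintype V] [DecidableEq V]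
    (hG : G.Connected) (hbip : ¬ G.Colorable 2) {k : ℕ} (hk : Fintype.card V ≤ k) :
    ∃ (r : V) (w : G.Walk r r), w.length + 1 = 2 * k ∧ ∀ x, x ∈ w.support := by
  obtain ⟨r, w, ⟨j, hj⟩, hlt⟩ := exists_odd_closed_walk_length_lt hG hbip
  have hcard := card_le_univ w.support.toFinset
  obtain ⟨v, w', hlen, hall⟩ := exists_closed_walk_forall_mem_support hG (k - j - 1) w
    (fun h => by simp [h.length_eq_zero] at hj) (by omega)
  exact ⟨v, w', by omega, hall⟩

end SimpleGraph

section AssociatedPrime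

variable {R M : Type*} [CommRing R] [AddCommGroup M] [Module R M] {m : Ideal R} {e : M}

lemma idealDepth_eq_zero_of_le_colon (he : e ≠ 0) (hm : m ≤ (⊥ : Submodule R M).colon {e}) :
    idealDepth m M = 0 := by
  refine Nat.eq_zero_of_le_zero (csSup_le' ?_)
  rintro _ ⟨_ | ⟨r, rs⟩, rfl, hrs, hreg⟩
  · rfl
  · have hr := ((RingTheory.Sequence.isWeaklyRegular_cons_iff M r rs).mp
      hreg.toIsWeaklyRegular).1
    have hre : r • e = 0 := by
      simpa [Submodule.mem_colon_singleton] using hm (hrs r List.mem_cons_self)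
    exact absurd (hr (hre.trans (smul_zero r).symm)) he

lemma mem_associatedPrimes_of_le_colon (hmax : m.IsMaximal) (he : e ≠ 0)
    (hm : m ≤ (⊥ : Submodule R M).colon {e}) : m ∈ associatedPrimes R M := by
  have hne : (⊥ : Submodule R M).colon {e} ≠ ⊤ :=
    (Ideal.ne_top_iff_one _).mpr (by simpa [Submodule.mem_colon_singleton] using he)
  exact ⟨hmax.isPrime, e, by rw [← hmax.eq_of_le hne hm, hmax.isPrime.radical]⟩

end AssociatedPrime

lemma maxIdeal_eq_ker_constantCoeff (σ K : Type*) [Field K] :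
    maxIdeal σ K = RingHom.ker (constantCoeff : MvPolynomial σ K →+* K) := by
  ext p
  have := mem_pow_idealOfVars_iff 1 p
  simp only [pow_one, Nat.one_le_iff_ne_zero, ne_eq, Finsupp.degree_eq_zero_iff,
    mem_support_iff] at this
  rw [maxIdeal, this, RingHom.mem_ker, constantCoeff_eq]
  exact ⟨fun h => not_not.mp fun h0 => h 0 h0 rfl, fun h x hx hx0 => hx (hx0 ▸ h)⟩

lemma maxIdeal_isMaximal (σ K : Type*) [Field K] : (maxIdeal σ K).IsMaximal := by
  rw [maxIdeal_eq_ker_constantCoeff]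
  exact RingHom.ker_isMaximal_of_surjective _ fun a => ⟨C a, constantCoeff_C _ a⟩

open SimpleGraph

section WhiskerEdgeIdeal

variable {n : ℕ} (K : Type*) [Field K] {G : SimpleGraph (Fin n)}

noncomputable def vertexMonomial (l : List (Fin n)) : MvPolynomial (Fin n ⊕ Fin n) K :=
  (l.map fun i => X (Sum.inl i)).prod

variable {K}

lemma vertexMonomial_cons (i : Fin n) (l : List (Fin n)) :
    vertexMonomial K (i :: l) = X (Sum.inl i) * vertexMonomial K l :=
  List.prod_cons

lemma vertexMonomial_perm {l l' : List (Fin n)} (h : l.Perm l') :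
    vertexMonomial K l = vertexMonomial K l' :=
  (h.map _).prod_eq

lemma X_inl_mul_X_inl_mem_whiskerEdgeIdeal {i j : Fin n} (h : G.Adj i j) :
    X (Sum.inl i) * X (Sum.inl j) ∈ whiskerEdgeIdeal K G :=
  Ideal.subset_span (Or.inl ⟨i, j, h, rfl⟩)

lemma X_inl_mul_X_inr_mem_whiskerEdgeIdeal (i : Fin n) :
    X (Sum.inl i) * X (Sum.inr i) ∈ whiskerEdgeIdeal K G :=
  Ideal.subset_span (Or.inr ⟨i, rfl⟩)

lemma vertexMonomial_mem_whiskerEdgeIdeal_pow :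
    ∀ {l : List (Fin n)}, l.IsChain G.Adj →
      vertexMonomial K l ∈ whiskerEdgeIdeal K G ^ (l.length / 2)
  | [], _ | [_], _ => by simp
  | i :: j :: l, hl => by
    rw [vertexMonomial_cons, vertexMonomial_cons, ← mul_assoc, List.length_cons,
      List.length_cons, show (l.length + 1 + 1) / 2 = l.length / 2 + 1 by omega, pow_succ']
    rw [List.isChain_cons_cons] at hl
    exact Ideal.mul_mem_mul (X_inl_mul_X_inl_mem_whiskerEdgeIdeal hl.1)
      (vertexMonomial_mem_whiskerEdgeIdeal_pow hl.2.tail)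

lemma vertexMonomial_notMem_whiskerEdgeIdeal_pow {l : List (Fin n)} {k : ℕ}
    (hl : l.length < 2 * k) : vertexMonomial K l ∉ whiskerEdgeIdeal K G ^ k := by
  set ψ : MvPolynomial (Fin n ⊕ Fin n) K →ₐ[K] Polynomial K := aeval fun _ => Polynomial.X
  have hI : whiskerEdgeIdeal K G ≤ (Ideal.span {Polynomial.X ^ 2}).comap ψ := by
    refine Ideal.span_le.mpr ?_
    rintro _ (⟨i, j, -, rfl⟩ | ⟨i, rfl⟩) <;> simp [ψ, sq]
  have hψ : ψ (vertexMonomial K l) = Polynomial.X ^ l.length := by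
    simp [ψ, vertexMonomial, map_list_prod, Function.comp_def]
  intro hu
  have h := Ideal.le_comap_pow _ k (Ideal.pow_right_mono hI k hu)
  rw [Ideal.mem_comap, hψ, Ideal.span_singleton_pow, ← pow_mul, Ideal.mem_span_singleton,
    pow_dvd_pow_iff Polynomial.X_ne_zero Polynomial.not_isUnit_X] at h
  omega

variable {k : ℕ}

lemma X_inl_mul_vertexMonomial_tail_support_mem {v : Fin n} (w : G.Walk v v)
    (hw : w.length + 1 = 2 * k) :
    X (Sum.inl v) * vertexMonomial K w.support.tail ∈ whiskerEdgeIdeal K G ^ k := by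
  rw [← vertexMonomial_cons, w.cons_tail_support]
  simpa [hw] using vertexMonomial_mem_whiskerEdgeIdeal_pow (K := K) w.isChain_adj_support

lemma X_inr_mul_vertexMonomial_tail_support_mem {v : Fin n} (w : G.Walk v v)
    (hw : w.length + 1 = 2 * k) :
    X (Sum.inr v) * vertexMonomial K w.support.tail ∈ whiskerEdgeIdeal K G ^ k := by
  cases w with
  | nil => simp only [Walk.length_nil, zero_add] at hw; omega
  | cons _ p =>
    -- `x_v` is the last factor of the monomial; reading the walk backwards brings it to the front
    rw [Walk.support_cons, List.tail_cons, vertexMonomial_perm (List.reverse_perm _).symm,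
      ← Walk.support_reverse, ← p.reverse.cons_tail_support, vertexMonomial_cons, ← mul_assoc,
      mul_comm (X _), show k = k - 1 + 1 by omega, pow_succ']
    refine Ideal.mul_mem_mul (X_inl_mul_X_inr_mem_whiskerEdgeIdeal v) ?_
    simpa [show p.length = 2 * (k - 1) by simp only [Walk.length_cons] at hw; omega] using
      vertexMonomial_mem_whiskerEdgeIdeal_pow (K := K) p.reverse.isChain_adj_support.tail

lemma X_mul_vertexMonomial_tail_support_mem {r : Fin n} (w : G.Walk r r)
    (hw : w.length + 1 = 2 * k) (hall : ∀ v, v ∈ w.support) (s : Fin n ⊕ Fin n) :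
    X s * vertexMonomial K w.support.tail ∈ whiskerEdgeIdeal K G ^ k := by
  have hrot (v : Fin n) : vertexMonomial K w.support.tail =
      vertexMonomial K (w.rotate v (hall v)).support.tail :=
    vertexMonomial_perm (w.support_rotate v _).perm.symm
  rcases s with v | v <;> rw [hrot v]
  · exact X_inl_mul_vertexMonomial_tail_support_mem _ (by simpa using hw)
  · exact X_inr_mul_vertexMonomial_tail_support_mem _ (by simpa using hw)

end WhiskerEdgeIdeal

/-- Herzog–Hibi–Qureshi, Corollary (non-bipartite case): if `G` is a finite simple connected
non-bipartite graph on `n` vertices, then `depth(S*/I(G*)^k) = 0` for all `k ≥ n`;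
equivalently, the graded maximal ideal is an associated prime of `S*/I(G*)^k`. -/
theorem depth_whisker_power_eq_zero_of_not_bipartite {n : ℕ} (K : Type*) [Field K]
    (G : SimpleGraph (Fin n)) (hG : G.Connected) (hbip : ¬ G.Colorable 2)
    (k : ℕ) (hk : n ≤ k) :
    idealDepth (maxIdeal (Fin n ⊕ Fin n) K)
      (MvPolynomial (Fin n ⊕ Fin n) K ⧸ (whiskerEdgeIdeal K G) ^ k) = 0 ∧
    maxIdeal (Fin n ⊕ Fin n) K ∈
      associatedPrimes (MvPolynomial (Fin n ⊕ Fin n) K)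
        (MvPolynomial (Fin n ⊕ Fin n) K ⧸ (whiskerEdgeIdeal K G) ^ k) := by
  obtain ⟨r, w, hlen, hall⟩ :=
    G.exists_closed_walk_length_eq_forall_mem_support hG hbip (k := k) (by simpa using hk)
  set e := Ideal.Quotient.mk (whiskerEdgeIdeal K G ^ k) (vertexMonomial K w.support.tail)
  have he : e ≠ 0 := by
    rw [Ne, Ideal.Quotient.eq_zero_iff_mem]
    exact vertexMonomial_notMem_whiskerEdgeIdeal_pow
      (by rw [List.length_tail, Walk.length_support]; omega)
  have hm : maxIdeal (Fin n ⊕ Fin n) K ≤ (⊥ : Submodule _ (_ ⧸ _)).colon {e} := by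
    refine Ideal.span_le.mpr ?_
    rintro _ ⟨s, rfl⟩
    rw [SetLike.mem_coe, Submodule.mem_colon_singleton, Submodule.mem_bot]
    exact Ideal.Quotient.eq_zero_iff_mem.mpr (X_mul_vertexMonomial_tail_support_mem w hlen hall s)
  exact ⟨idealDepth_eq_zero_of_le_colon he hm,
    mem_associatedPrimes_of_le_colon (maxIdeal_isMaximal _ K) he hm⟩
end

section
/- Let I ⊆ S = K[x_1,...,x_n] be a monomial ideal, x_1 a variable with deg_{x_1}(u) ≥ 2 for some minimal generator u, and let I' ⊆ S[y] be the 1-step polarization of I with respect to x_1 (replace one factor x_1 by y in each generator divisible by x_1^2). Then y − x_1 is a non zero-divisor on S[y]/I', and (S[y]/I')/(y − x_1)(S[y]/I') ≅ S/I. -/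
open MvPolynomial

/-! Let `J` be a monomial ideal whose generators have `y`-degree at most one, and such that a
`y`-free monomial `m` lies in `J` whenever `y m` and `x m` do. Then `y - x` is a non zero-divisor
modulo `J`: if `(y - x) f ∈ J` and no term of `f` lies in `J`, the term `x^c` of `f` of highest
`y`-degree produces the term `y x^c` of `(y - x) f`, which forces `x^c ∈ J` unless `f` is `y`-free;
in that case `x x^c ∈ J` too. The polarization `I'` is such an ideal for `x = x_0`.
The substitution `y ↦ x_0` maps `S[y]` onto `S` with kernel `(y - x_0)` and maps `I'` onto `I`,
which gives the isomorphism. -/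

/-- The 1-step polarization, with respect to the variable `x_0`, of the monomial with
exponent vector `a`: if `x_0^2 ∣ x^a` one factor `x_0` is replaced by the new variable
`y = X none` (the other variables `x_i` become `X (some i)`); otherwise the monomial is
unchanged. -/
noncomputable def oneStepPolarize {n : ℕ} (K : Type*) [Field K] (a : Fin (n + 1) →₀ ℕ) :
    MvPolynomial (Option (Fin (n + 1))) K :=
  if 2 ≤ a 0 then
    monomial (Finsupp.mapDomain Option.some (a - Finsupp.single 0 1) +
      Finsupp.single (none : Option (Fin (n + 1))) 1) 1
  else monomial (Finsupp.mapDomain Option.some a) 1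

theorem Ideal.isSMulRegular_mk_iff {R : Type*} [CommRing R] (I : Ideal R) (r : R) :
    IsSMulRegular (R ⧸ I) (Ideal.Quotient.mk I r) ↔ ∀ x, r * x ∈ I → x ∈ I := by
  rw [← Ideal.Quotient.algebraMap_eq, isSMulRegular_algebraMap_iff]
  exact isSMulRegular_quotient_iff_mem_of_smul_mem I r

theorem Ideal.nonempty_quotient_span_mk_ringEquiv {A S : Type*} [CommRing A] [CommRing S]
    {f : A →+* S} (hf : Function.Surjective f) (I : Ideal A) {ξ : A}
    (hker : RingHom.ker f = Ideal.span {ξ}) :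
    Nonempty ((A ⧸ I) ⧸ Ideal.span {Ideal.Quotient.mk I ξ} ≃+* S ⧸ I.map f) := by
  have hker' : RingHom.ker ((Ideal.Quotient.mk (I.map f)).comp f) = I ⊔ Ideal.span {ξ} := by
    rw [← RingHom.comap_ker, Ideal.mk_ker, Ideal.comap_map_of_surjective f hf,
      ← RingHom.ker_eq_comap_bot, hker]
  have hspan : Ideal.span {Ideal.Quotient.mk I ξ} = (Ideal.span {ξ}).map (Ideal.Quotient.mk I) := by
    rw [Ideal.map_span, Set.image_singleton]
  exact ⟨(Ideal.quotEquivOfEq hspan).trans <| (DoubleQuot.quotQuotEquivQuotSup I _).trans <|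
    (Ideal.quotEquivOfEq hker'.symm).trans <|
      RingHom.quotientKerEquivOfSurjective (Ideal.Quotient.mk_surjective.comp hf)⟩

namespace MvPolynomial

variable {σ R : Type*} [CommRing R]

theorem support_sum_monomial_subset (s : Finset (σ →₀ ℕ)) (a : (σ →₀ ℕ) → R) :
    (∑ d ∈ s, monomial d (a d)).support ⊆ s := by
  classical
  intro d hd
  obtain ⟨e, he, hde⟩ := Finset.mem_biUnion.1 (support_sum hd)
  rwa [Finset.mem_singleton.1 (support_monomial_subset hde)]

section Regular

variable {x y : σ} {f : MvPolynomial σ R} {c : σ →₀ ℕ}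

theorem coeff_single_add_X_sub_X_mul_of_le (hxy : x ≠ y) (hc : ∀ d ∈ f.support, d y ≤ c y) :
    coeff (Finsupp.single y 1 + c) ((X y - X x) * f) = coeff c f := by
  classical
  rw [sub_mul, coeff_sub, coeff_X_mul, coeff_X_mul', sub_eq_self]
  split_ifs
  · by_contra h
    have := hc _ (mem_support_iff.2 h)
    simp [hxy] at this
  · rfl

theorem coeff_single_add_X_sub_X_mul_of_eq_zero (hxy : x ≠ y) (hc : c y = 0) :
    coeff (Finsupp.single x 1 + c) ((X y - X x) * f) = -coeff c f := by
  classical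
  rw [sub_mul, coeff_sub, coeff_X_mul, coeff_X_mul', if_neg, zero_sub]
  simp [hxy, hc]

variable {B : Set (σ →₀ ℕ)}

theorem eq_zero_of_X_sub_X_mul_mem (hxy : x ≠ y) (hdeg : ∀ v ∈ B, v y ≤ 1)
    (hsat : ∀ c : σ →₀ ℕ, c y = 0 → (∃ v ∈ B, v ≤ Finsupp.single y 1 + c) →
      (∃ v ∈ B, v ≤ Finsupp.single x 1 + c) → ∃ v ∈ B, v ≤ c)
    (hf : (X y - X x) * f ∈ Ideal.span ((fun s => monomial s (1 : R)) '' B))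
    (hsupp : ∀ d ∈ f.support, ¬∃ v ∈ B, v ≤ d) : f = 0 := by
  by_contra hne
  obtain ⟨c, hc, hmax⟩ := f.support.exists_max_image (· y) (support_nonempty.2 hne)
  have hcf := mem_support_iff.1 hc
  rw [mem_ideal_span_monomial_image] at hf
  obtain ⟨v, hv, hvc⟩ := hf _ (by
    rwa [mem_support_iff, coeff_single_add_X_sub_X_mul_of_le hxy hmax])
  refine hsupp c hc ?_
  rcases Nat.eq_zero_or_pos (c y) with hcy | hcy
  · obtain ⟨w, hw, hwc⟩ := hf _ (by
      rw [mem_support_iff, coeff_single_add_X_sub_X_mul_of_eq_zero hxy hcy]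
      exact neg_ne_zero.2 hcf)
    exact hsat c hcy ⟨v, hv, hvc⟩ ⟨w, hw, hwc⟩
  · -- the generator `v` has `y`-degree at most one, so it already divides `x^c`
    refine ⟨v, hv, fun i => ?_⟩
    have hvi := hvc i
    by_cases hi : i = y
    · subst hi
      have := hdeg v hv
      omega
    · simpa [Finsupp.single_apply, Ne.symm hi] using hvi

theorem mem_of_X_sub_X_mul_mem (hxy : x ≠ y) (hdeg : ∀ v ∈ B, v y ≤ 1)
    (hsat : ∀ c : σ →₀ ℕ, c y = 0 → (∃ v ∈ B, v ≤ Finsupp.single y 1 + c) →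
      (∃ v ∈ B, v ≤ Finsupp.single x 1 + c) → ∃ v ∈ B, v ≤ c)
    (hf : (X y - X x) * f ∈ Ideal.span ((fun s => monomial s (1 : R)) '' B)) :
    f ∈ Ideal.span ((fun s => monomial s (1 : R)) '' B) := by
  classical
  set g := ∑ d ∈ f.support with ∃ v ∈ B, v ≤ d, monomial d (coeff d f)
  set h := ∑ d ∈ f.support with ¬∃ v ∈ B, v ≤ d, monomial d (coeff d f)
  have hsplit : g + h = f := by rw [Finset.sum_filter_add_sum_filter_not, ← as_sum]
  have hg : g ∈ Ideal.span ((fun s => monomial s (1 : R)) '' B) :=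
    mem_ideal_span_monomial_image.2 fun d hd =>
      (Finset.mem_filter.1 (support_sum_monomial_subset _ _ hd)).2
  have hh : h = 0 := by
    refine eq_zero_of_X_sub_X_mul_mem hxy hdeg hsat ?_ fun d hd =>
      (Finset.mem_filter.1 (support_sum_monomial_subset _ _ hd)).2
    have := Ideal.sub_mem _ hf (Ideal.mul_mem_left _ (X y - X x) hg)
    rwa [← hsplit, mul_add, add_sub_cancel_left] at this
  rwa [← hsplit, hh, add_zero]

end Regular

noncomputable def substNone (x : σ) : MvPolynomial (Option σ) R →ₐ[R] MvPolynomial σ R :=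
  aeval fun o => o.elim (X x) X

section substNone

variable {x : σ}

@[simp]
theorem substNone_X_none : substNone x (X none : MvPolynomial (Option σ) R) = X x := by
  simp [substNone]

@[simp]
theorem substNone_X_some (i : σ) : substNone x (X (some i) : MvPolynomial (Option σ) R) = X i := by
  simp [substNone]

@[simp]
theorem substNone_rename_some (p : MvPolynomial σ R) : substNone x (rename some p) = p := by
  rw [substNone, aeval_rename]
  exact aeval_X_left_apply p

theorem substNone_surjective : Function.Surjective (substNone x : MvPolynomial (Option σ) R → _) :=
  fun p => ⟨rename some p, substNone_rename_some p⟩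

theorem ker_substNone :
    RingHom.ker (substNone x : MvPolynomial (Option σ) R →ₐ[R] _) =
      Ideal.span {X none - X (some x)} := by
  set J : Ideal (MvPolynomial (Option σ) R) := Ideal.span {X none - X (some x)}
  refine le_antisymm (fun p hp => ?_) ?_
  · -- `rename some ∘ substNone x` agrees with the identity modulo `y - x`
    have hid : (Ideal.Quotient.mkₐ R J).comp ((rename some).comp (substNone x)) =
        Ideal.Quotient.mkₐ R J := by
      refine algHom_ext fun o => ?_
      cases o with
      | none =>
        rw [AlgHom.comp_apply, AlgHom.comp_apply, substNone_X_none, rename_X,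
          Ideal.Quotient.mkₐ_eq_mk, Ideal.Quotient.eq, ← neg_sub]
        exact neg_mem (Ideal.mem_span_singleton_self _)
      | some i => simp
    rw [RingHom.mem_ker] at hp
    have hp' := congrArg (· p) hid
    simp only [AlgHom.comp_apply, hp, map_zero] at hp'
    exact Ideal.Quotient.eq_zero_iff_mem.1 hp'.symm
  · rw [Ideal.span_le, Set.singleton_subset_iff, SetLike.mem_coe, RingHom.mem_ker]
    simp

end substNone

noncomputable def polarizeExp (x : σ) (a : σ →₀ ℕ) : Option σ →₀ ℕ :=
  if 2 ≤ a x then Finsupp.mapDomain some (a - Finsupp.single x 1) + Finsupp.single none 1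
  else Finsupp.mapDomain some a

section polarizeExp

variable {x : σ}

@[simp]
theorem polarizeExp_none (a : σ →₀ ℕ) : polarizeExp x a none = if 2 ≤ a x then 1 else 0 := by
  unfold polarizeExp
  split_ifs <;> simp [Finsupp.mapDomain_of_notMem_range]

theorem polarizeExp_none_le_one (a : σ →₀ ℕ) : polarizeExp x a none ≤ 1 := by
  rw [polarizeExp_none]
  split_ifs <;> omega

@[simp]
theorem polarizeExp_some (a : σ →₀ ℕ) (i : σ) :
    polarizeExp x a (some i) = if 2 ≤ a x then (a - Finsupp.single x 1 : σ →₀ ℕ) i else a i := by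
  unfold polarizeExp
  split_ifs <;> simp [Finsupp.mapDomain_apply (Option.some_injective σ)]

theorem exists_polarizeExp_le (A : Set (σ →₀ ℕ)) (c : Option σ →₀ ℕ) (hc : c none = 0)
    (h₁ : ∃ v ∈ polarizeExp x '' A, v ≤ Finsupp.single none 1 + c)
    (h₂ : ∃ v ∈ polarizeExp x '' A, v ≤ Finsupp.single (some x) 1 + c) :
    ∃ v ∈ polarizeExp x '' A, v ≤ c := by
  classical
  rw [Set.exists_mem_image] at h₁ h₂ ⊢
  obtain ⟨a, ha, h₁⟩ := h₁
  obtain ⟨b, hb, h₂⟩ := h₂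
  simp only [Finsupp.le_def, Option.forall, Finsupp.add_apply, polarizeExp_none,
    polarizeExp_some, Finsupp.tsub_apply, Finsupp.single_apply, Option.some_inj, reduceCtorEq,
    if_true, if_false, add_zero, zero_add, hc] at h₁ h₂ ⊢
  have hb₀ : ¬2 ≤ b x := by simpa using h₂.1
  by_cases ha₀ : 2 ≤ a x
  · -- then `x ∣ x^c`, which absorbs the extra factor `x` in `h₂`
    have hcx := h₁.2 x
    rw [if_pos ha₀, if_pos rfl] at hcx
    refine ⟨b, hb, by simp [hb₀], fun i => ?_⟩
    have hbi := h₂.2 i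
    rw [if_neg hb₀] at hbi ⊢
    split_ifs at hbi with hi
    · subst hi
      omega
    · simpa using hbi
  · exact ⟨a, ha, by simp [ha₀], by simpa [ha₀] using h₁.2⟩

theorem substNone_monomial_mapDomain_some (a : σ →₀ ℕ) (r : R) :
    substNone x (monomial (Finsupp.mapDomain some a) r) = monomial a r := by
  rw [← rename_monomial, substNone_rename_some]

theorem substNone_monomial_polarizeExp (a : σ →₀ ℕ) :
    substNone x (monomial (polarizeExp x a) (1 : R)) = monomial a 1 := by
  unfold polarizeExp
  split_ifs with h
  · rw [monomial_add_single, pow_one, map_mul, substNone_monomial_mapDomain_some, substNone_X_none,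
      ← pow_one (X x), ← monomial_add_single,
      tsub_add_cancel_of_le (Finsupp.single_le_iff.2 (by omega))]
  · exact substNone_monomial_mapDomain_some a 1

end polarizeExp

end MvPolynomial

theorem oneStepPolarize_eq_monomial {n : ℕ} (K : Type*) [Field K] (a : Fin (n + 1) →₀ ℕ) :
    oneStepPolarize K a = monomial (polarizeExp 0 a) 1 := by
  unfold oneStepPolarize polarizeExp
  split_ifs <;> rfl

theorem oneStepPolarization_regular_general {n : ℕ} (K : Type*) [Field K]
    (A : Set (Fin (n + 1) →₀ ℕ))
    (I : Ideal (MvPolynomial (Fin (n + 1)) K))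
    (hI : I = Ideal.span ((fun a => (monomial a (1 : K) : MvPolynomial (Fin (n + 1)) K)) '' A))
    (I' : Ideal (MvPolynomial (Option (Fin (n + 1))) K))
    (hI' : I' = Ideal.span (oneStepPolarize K '' A)) :
    IsSMulRegular (MvPolynomial (Option (Fin (n + 1))) K ⧸ I')
      (Ideal.Quotient.mk I' (X none - X (some 0))) ∧
    Nonempty
      (((MvPolynomial (Option (Fin (n + 1))) K ⧸ I') ⧸
          Ideal.span {Ideal.Quotient.mk I' (X none - X (some 0))}) ≃+*
        (MvPolynomial (Fin (n + 1)) K ⧸ I)) := by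
  have hI'_monomial : I' = Ideal.span ((fun s => monomial s (1 : K)) '' (polarizeExp 0 '' A)) := by
    rw [hI', Set.image_image]
    simp only [oneStepPolarize_eq_monomial]
  have hmap : I'.map (substNone 0) = I := by
    rw [hI'_monomial, Ideal.map_span, Set.image_image, Set.image_image, hI]
    simp only [substNone_monomial_polarizeExp]
  refine ⟨?_, ?_⟩
  · rw [Ideal.isSMulRegular_mk_iff, hI'_monomial]
    exact fun f => mem_of_X_sub_X_mul_mem (Option.some_ne_none 0)
      (Set.forall_mem_image.2 fun a _ => polarizeExp_none_le_one a) (exists_polarizeExp_le A)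
  · rw [← hmap]
    exact Ideal.nonempty_quotient_span_mk_ringEquiv substNone_surjective I' ker_substNone

set_option synthInstance.maxHeartbeats 1000000 in
/-- Let `I ⊆ S = K[x_0,…,x_n]` be the monomial ideal minimally generated by the monomials
`x^a`, `a ∈ A`, with `deg_{x_0} x^a ≥ 2` for some generator, and let `I' ⊆ S[y]` be the
1-step polarization of `I` with respect to `x_0`. Then `y - x_0` is a non zero-divisor on
`S[y]/I'`, and `(S[y]/I')/(y - x_0)(S[y]/I') ≅ S/I`. -/
theorem oneStepPolarization_regular {n : ℕ} (K : Type*) [Field K]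
    (A : Set (Fin (n + 1) →₀ ℕ)) (hmin : ∀ a ∈ A, ∀ b ∈ A, a ≤ b → a = b)
    (hdeg : ∃ a ∈ A, 2 ≤ a 0)
    (I : Ideal (MvPolynomial (Fin (n + 1)) K))
    (hI : I = Ideal.span ((fun a => (monomial a (1 : K) : MvPolynomial (Fin (n + 1)) K)) '' A))
    (I' : Ideal (MvPolynomial (Option (Fin (n + 1))) K))
    (hI' : I' = Ideal.span (oneStepPolarize K '' A)) :
    IsSMulRegular (MvPolynomial (Option (Fin (n + 1))) K ⧸ I')
      (Ideal.Quotient.mk I' (X none - X (some 0))) ∧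
    Nonempty
      (((MvPolynomial (Option (Fin (n + 1))) K ⧸ I') ⧸
          Ideal.span {Ideal.Quotient.mk I' (X none - X (some 0))}) ≃+*
        (MvPolynomial (Fin (n + 1)) K ⧸ I)) :=
  oneStepPolarization_regular_general K A I hI I' hI'
end
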